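/- Let F : S → T be a good extension of an essentially small triangulated category S with a metric {M_i} into a triangulated category T with coproducts. If E ∈ T is a homotopy colimit of F applied to a Cauchy sequence in S, and X ∈ T satisfies y(X) ∈ Fc(S), then the natural map Hom_T(E, X) → Hom_{Mod-S}(y(E), y(X)) is an isomorphism. -/

import Mathlib

namespace Stmt4

open CategoryTheory Category Limits Pretriangulated ZeroObject

universe v u u'

variable {S : Type u} [Category.{v} S] [Preadditive S] [HasZeroObject S]
  [HasShift S ℤ] [∀ n : ℤ, (CategoryTheory.shiftFunctor S n).Additive] [Pretriangulated S]

structure TriMetric (S : Type u) [Category.{v} S] [Preadditive S] [HasZeroObject S]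
    [HasShift S ℤ] [∀ n : ℤ, (CategoryTheory.shiftFunctor S n).Additive] [Pretriangulated S] where
  M : ℕ → Set S
  zero_mem : ∀ i, (0 : S) ∈ M i
  antitone : ∀ i, M (i + 1) ⊆ M i
  ext_closed : ∀ i, ∀ T ∈ (distTriang S), T.obj₁ ∈ M i → T.obj₃ ∈ M i → T.obj₂ ∈ M i

def CauchySeq (μ : TriMetric S) (E : ℕ ⥤ S) : Prop :=
  ∀ i : ℕ, 0 < i → ∀ j : ℤ, ∃ N : ℕ, 0 < N ∧ ∀ m m' : ℕ, N ≤ m → ∀ (hmm : m < m'),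
    ∀ (D : S) (g : E.obj m' ⟶ D) (h : D ⟶ (E.obj m)⟦(1 : ℤ)⟧),
      Triangle.mk (E.map (homOfLE hmm.le)) g h ∈ (distTriang S) → D⟦j⟧ ∈ μ.M i

variable {T : Type u'} [Category.{v} T] [Preadditive T] [HasZeroObject T]
  [HasShift T ℤ] [∀ n : ℤ, (CategoryTheory.shiftFunctor T n).Additive] [Pretriangulated T]
  [HasCoproducts.{0} T]

variable (F : S ⥤ T) [F.Additive]

/-- `y : T ⥤ Mod-S` on objects: `y(X) = Hom_T(F(−), X)`. -/
def yObj (X : T) : Sᵒᵖ ⥤ AddCommGrpCat.{v} := F.op ⋙ preadditiveYoneda.obj X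

/-- `y` on morphisms. -/
def yHom {X X' : T} (φ : X ⟶ X') : yObj F X ⟶ yObj F X' :=
  Functor.whiskerLeft F.op (preadditiveYoneda.map φ)

/-- The canonical map `Y(s₀) ⟶ y(X)` induced by `k : F(s₀) ⟶ X`. -/
def yMap {s₀ : S} {X : T} (k : F.obj s₀ ⟶ X) : preadditiveYoneda.obj s₀ ⟶ yObj F X where
  app s := AddCommGrpCat.ofHom
    { toFun := fun f => F.map f ≫ k
      map_zero' := by exact (congrArg (· ≫ k) (F.map_zero _ _)).trans zero_comp
      map_add' := fun f g => by
        exact (congrArg (· ≫ k) (F.map_add (f := f) (g := g))).trans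
          (Preadditive.add_comp _ _ _ _ _ _) }
  naturality a b t := by
    ext f
    exact (congrArg (· ≫ k) (F.map_comp t.unop f)).trans (Category.assoc _ _ _)

variable (E : ℕ ⥤ S)

/-- The endomorphism "shift" of `∐ F(E_i)` used in the definition of homotopy colimits. -/
noncomputable def shiftMapCoprod : (∐ fun i : ℕ => F.obj (E.obj i)) ⟶ (∐ fun i : ℕ => F.obj (E.obj i)) :=
  Sigma.desc fun i => F.map (E.map (homOfLE (Nat.le_succ i))) ≫ Sigma.ι (fun i : ℕ => F.obj (E.obj i)) (i + 1)

/-- The map `1 − shift`. -/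
noncomputable def oneMinusShift : (∐ fun i : ℕ => F.obj (E.obj i)) ⟶ (∐ fun i : ℕ => F.obj (E.obj i)) :=
  𝟙 _ - shiftMapCoprod F E

/-- `X`, with structure maps `π` from the coproduct, is a homotopy colimit of `F ∘ E` if
the triangle `∐ F(E_i) → ∐ F(E_i) → X → Σ ∐ F(E_i)` is distinguished. -/
def IsHoColim (X : T) (π : (∐ fun i : ℕ => F.obj (E.obj i)) ⟶ X)
    (δ : X ⟶ (∐ fun i : ℕ => F.obj (E.obj i))⟦(1 : ℤ)⟧) : Prop :=
  Triangle.mk (oneMinusShift F E) π δ ∈ distTriang T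

/-- `y(X)`, equipped with the canonical maps from the `Y(E_i)`, is the colimit of
`Y(E_*)` in `Mod-S`. -/
def IsYColimit (X : T) (π : (∐ fun i : ℕ => F.obj (E.obj i)) ⟶ X) : Prop :=
  ∀ (W : Sᵒᵖ ⥤ AddCommGrpCat.{v}) (w : ∀ i : ℕ, preadditiveYoneda.obj (E.obj i) ⟶ W),
    (∀ i : ℕ, preadditiveYoneda.map (E.map (homOfLE (Nat.le_succ i))) ≫ w (i + 1) = w i) →
    ∃! u : yObj F X ⟶ W,
      ∀ i : ℕ, yMap F (Sigma.ι (fun i : ℕ => F.obj (E.obj i)) i ≫ π) ≫ u = w i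

/-- `F : S ⥤ T` is a good extension with respect to the metric `μ` if for every Cauchy
sequence `E_*` in `S` the natural map `colim Y(E_*) ⟶ y(hocolim F(E_*))` is an
isomorphism, i.e. `y(hocolim F(E_*))` is the colimit of `Y(E_*)`. -/
def GoodExtension (μ : TriMetric S) : Prop :=
  ∀ (E : ℕ ⥤ S), CauchySeq μ E →
    ∀ (X : T) (π : (∐ fun i : ℕ => F.obj (E.obj i)) ⟶ X)
      (δ : X ⟶ (∐ fun i : ℕ => F.obj (E.obj i))⟦(1 : ℤ)⟧),
      IsHoColim F E X π δ → IsYColimit F E X π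


/-- `Fc(S) ⊆ Mod-S`: the compactly supported objects. -/
def Fc (μ : TriMetric S) : Set (Sᵒᵖ ⥤ AddCommGrpCat.{v}) :=
  {A | ∀ j : ℤ, ∃ i : ℕ, ∀ s ∈ μ.M i, ∀ f : preadditiveYoneda.obj (s⟦j⟧) ⟶ A, f = 0}

end Stmt4

/-! The triangle `∐ F(Eᵢ) → ∐ F(Eᵢ) → E → Σ ∐ F(Eᵢ)` reduces both halves to maps out of `E`.
For surjectivity, a transformation `Φ : y(E) ⟶ y(X)` gives a compatible family
`F(Eᵢ) ⟶ X`, hence a map `∐ F(Eᵢ) ⟶ X` killing `1 − shift`, hence a map `E ⟶ X`; as `F` is a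
good extension, `y(E)` is the colimit of the `Y(Eᵢ)`, so the image of that map is `Φ`.
For injectivity, a map `E ⟶ X` killed by `y` vanishes after `π`, so it factors through `δ`,
and every `δ ≫ θ` vanishes because `θ : Σ ∐ F(Eᵢ) ⟶ X` factors through `Σ(1 − shift)`. That
factorisation means solving `uᵢ − Σ F(eᵢ) ≫ uᵢ₊₁ = θᵢ`, which is possible once precomposition
with `Σ F(eᵢ)` is surjective on `Hom(−, X)` for large `i`; and it is, because the cones of
`Eᵢ → Eᵢ₊₁` eventually lie in a ball `Mⱼ` on which `Hom(F(−), X)` vanishes (Cauchy condition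
and `y(X) ∈ Fc(S)`). -/

lemma exists_sub_apply_succ_eq {A : ℕ → Type*} [∀ i, AddCommGroup (A i)]
    (r : ∀ i, A (i + 1) → A i) (N : ℕ) (hr : ∀ i, N ≤ i → Function.Surjective (r i))
    (θ : ∀ i, A i) : ∃ u : ∀ i, A i, ∀ i, u i - r i (u (i + 1)) = θ i := by
  induction N generalizing A with
  | zero =>
    refine ⟨fun i => Nat.rec 0 (fun i ui => Function.surjInv (hr i i.zero_le) (ui - θ i)) i,
      fun i => ?_⟩
    simp only [Function.surjInv_eq, sub_sub_cancel]
  | succ N ih =>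
    obtain ⟨u, hu⟩ := ih (fun i => r (i + 1)) (fun i hi => hr (i + 1) (by omega))
      (fun i => θ (i + 1))
    refine ⟨fun i => Nat.casesOn i (θ 0 + r 0 (u 0)) u, ?_⟩
    rintro (_ | i)
    · exact add_sub_cancel_right _ _
    · exact hu i

namespace CategoryTheory.Pretriangulated

open Limits

variable {C : Type*} [Category C] [Preadditive C] [HasZeroObject C] [HasShift C ℤ]
  [∀ n : ℤ, (CategoryTheory.shiftFunctor C n).Additive] [Pretriangulated C]

lemma Triangle.shift_map_mor₁_comp_surjective {Δ : Triangle C} (hΔ : Δ ∈ distTriang C) {X : C}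
    (h : ∀ k : Δ.obj₃ ⟶ X, k = 0) :
    Function.Surjective fun g : Δ.obj₂⟦(1 : ℤ)⟧ ⟶ X => Δ.mor₁⟦(1 : ℤ)⟧' ≫ g := by
  intro x
  obtain ⟨g, hg⟩ := Triangle.yoneda_exact₃ _ (rot_of_distTriang _ hΔ) x (h _)
  refine ⟨-g, ?_⟩
  rw [hg, Triangle.rotate_mor₃]
  exact (Preadditive.comp_neg _ _).trans (Preadditive.neg_comp _ _).symm

lemma Triangle.eq_of_mor₂_comp_eq {Δ : Triangle C} (hΔ : Δ ∈ distTriang C) {X : C}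
    (hmor₃ : ∀ θ : Δ.obj₁⟦(1 : ℤ)⟧ ⟶ X, Δ.mor₃ ≫ θ = 0) {a b : Δ.obj₃ ⟶ X}
    (h : Δ.mor₂ ≫ a = Δ.mor₂ ≫ b) : a = b := by
  obtain ⟨θ, hθ⟩ := Triangle.yoneda_exact₃ _ hΔ (a - b) (by rw [Preadditive.comp_sub, h, sub_self])
  exact sub_eq_zero.1 (hθ.trans (hmor₃ θ))

end CategoryTheory.Pretriangulated

namespace Stmt4

open CategoryTheory Category Limits Pretriangulated ZeroObject

universe v u u'

section Yoneda

variable {S : Type u} [Category.{v} S] {T : Type u'} [Category.{v} T] [Preadditive T]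
  (F : S ⥤ T)

lemma yObj_naturality {X X' : T} (Φ : yObj F X ⟶ yObj F X') {s s' : S} (e : s ⟶ s')
    (g : F.obj s' ⟶ X) :
    Φ.app (Opposite.op s) (F.map e ≫ g) = F.map e ≫ Φ.app (Opposite.op s') g :=
  ConcreteCategory.congr_hom (Φ.naturality e.op) g

lemma comp_eq_of_yHom_eq {X X' : T} {φ₁ φ₂ : X ⟶ X'} (h : yHom F φ₁ = yHom F φ₂) {s : S}
    (g : F.obj s ⟶ X) : g ≫ φ₁ = g ≫ φ₂ :=
  ConcreteCategory.congr_hom (NatTrans.congr_app h (Opposite.op s)) g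

section Coproduct

variable [HasCoproducts.{0} T] (E : ℕ ⥤ S)

lemma ι_oneMinusShift (i : ℕ) :
    Sigma.ι (fun i => F.obj (E.obj i)) i ≫ oneMinusShift F E =
      Sigma.ι (fun i => F.obj (E.obj i)) i -
        F.map (E.map (homOfLE (Nat.le_succ i))) ≫ Sigma.ι (fun i => F.obj (E.obj i)) (i + 1) := by
  simp [oneMinusShift, shiftMapCoprod, Preadditive.comp_sub]

lemma oneMinusShift_comp_eq_zero_iff {X : T} (g : (∐ fun i => F.obj (E.obj i)) ⟶ X) :
    oneMinusShift F E ≫ g = 0 ↔ ∀ i, F.map (E.map (homOfLE (Nat.le_succ i))) ≫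
      Sigma.ι (fun i => F.obj (E.obj i)) (i + 1) ≫ g = Sigma.ι (fun i => F.obj (E.obj i)) i ≫ g := by
  refine ⟨fun h i => ?_, fun h => Sigma.hom_ext _ _ fun i => ?_⟩
  · have := Sigma.ι (fun i => F.obj (E.obj i)) i ≫= h
    rwa [comp_zero, ← assoc, ι_oneMinusShift, Preadditive.sub_comp, sub_eq_zero, assoc,
      eq_comm] at this
  · rw [comp_zero, ← assoc, ι_oneMinusShift, Preadditive.sub_comp, sub_eq_zero, assoc, h]

end Coproduct

variable [Preadditive S] [F.Additive]

lemma yMap_app_id {s₀ : S} {X : T} (k : F.obj s₀ ⟶ X) :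
    (yMap F k).app (Opposite.op s₀) (𝟙 s₀) = k := by
  change F.map (𝟙 s₀) ≫ k = k
  rw [F.map_id, id_comp]

lemma yMap_comp {s₀ : S} {X X' : T} (k : F.obj s₀ ⟶ X) (Φ : yObj F X ⟶ yObj F X') :
    yMap F k ≫ Φ = yMap F (Φ.app (Opposite.op s₀) k) := by
  ext ⟨s⟩ g
  exact ConcreteCategory.congr_hom (Φ.naturality g.op) k

lemma preadditiveYoneda_map_comp_yMap {s₀ s₁ : S} {X : T} (e : s₀ ⟶ s₁) (k : F.obj s₁ ⟶ X) :
    preadditiveYoneda.map e ≫ yMap F k = yMap F (F.map e ≫ k) := by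
  ext s g
  exact (congrArg (· ≫ k) (F.map_comp (X := s.unop) g e)).trans (assoc _ _ _)

lemma IsYColimit.hom_ext [HasCoproducts.{0} T] {E : ℕ ⥤ S} {X : T}
    {π : (∐ fun i => F.obj (E.obj i)) ⟶ X} (hY : IsYColimit F E X π)
    (hπ : oneMinusShift F E ≫ π = 0) {W : Sᵒᵖ ⥤ AddCommGrpCat.{v}} {u₁ u₂ : yObj F X ⟶ W}
    (h : ∀ i, yMap F (Sigma.ι (fun i => F.obj (E.obj i)) i ≫ π) ≫ u₁ =
      yMap F (Sigma.ι (fun i => F.obj (E.obj i)) i ≫ π) ≫ u₂) : u₁ = u₂ := by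
  obtain ⟨u, -, hu⟩ := hY W (fun i => yMap F (Sigma.ι (fun i => F.obj (E.obj i)) i ≫ π) ≫ u₁)
    fun i => by
      rw [← assoc, preadditiveYoneda_map_comp_yMap, (oneMinusShift_comp_eq_zero_iff F E π).1 hπ i]
  exact (hu u₁ fun _ => rfl).trans (hu u₂ fun i => (h i).symm).symm

end Yoneda

section Metric

variable {S : Type u} [Category.{v} S] [Preadditive S] [HasZeroObject S] [HasShift S ℤ]
  [∀ n : ℤ, (shiftFunctor S n).Additive] [Pretriangulated S]

lemma TriMetric.mem_of_iso (μ : TriMetric S) {i : ℕ} {s s' : S} (e : s ≅ s')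
    (hs' : s' ∈ μ.M i) : s ∈ μ.M i := by
  refine μ.ext_closed i (Triangle.mk (0 : 0 ⟶ s) e.hom 0) ?_ (μ.zero_mem i) hs'
  refine isomorphic_distinguished _ (contractible_distinguished₁ s) _ ?_
  exact Triangle.isoMk _ _ (Iso.refl _) (Iso.refl _) e.symm
    (by dsimp only [Triangle.mk]; simp) (by dsimp only [Triangle.mk]; simp)
    (by dsimp only [Triangle.mk]; simp)

variable {T : Type u'} [Category.{v} T] [Preadditive T] (F : S ⥤ T) [F.Additive]

lemma exists_hom_eq_zero_of_mem_Fc {μ : TriMetric S} {X : T} (hX : yObj F X ∈ Fc μ) :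
    ∃ i, ∀ s ∈ μ.M i, ∀ k : F.obj s ⟶ X, k = 0 := by
  obtain ⟨i, hi⟩ := hX 0
  refine ⟨i, fun s hs k => ?_⟩
  have hk : F.map ((shiftFunctorZero S ℤ).hom.app s) ≫ k = 0 := by
    rw [← yMap_app_id F (F.map ((shiftFunctorZero S ℤ).hom.app s) ≫ k), hi s hs (yMap F _)]
    rfl
  rwa [← cancel_epi (F.map ((shiftFunctorZero S ℤ).hom.app s)), comp_zero]

variable [HasZeroObject T] [HasShift T ℤ] [∀ n : ℤ, (shiftFunctor T n).Additive]
  [Pretriangulated T] [F.CommShift ℤ] [F.IsTriangulated]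

lemma CauchySeq.eventually_surjective {μ : TriMetric S} {E : ℕ ⥤ S} (hE : CauchySeq μ E) {X : T}
    (hX : yObj F X ∈ Fc μ) :
    ∃ N, ∀ i, N ≤ i → Function.Surjective fun a : (F.obj (E.obj (i + 1)))⟦(1 : ℤ)⟧ ⟶ X =>
      (F.map (E.map (homOfLE (Nat.le_succ i))))⟦(1 : ℤ)⟧' ≫ a := by
  obtain ⟨j, hj⟩ := exists_hom_eq_zero_of_mem_Fc F hX
  obtain ⟨N, -, hN⟩ := hE (j + 1) j.succ_pos 0
  refine ⟨N, fun i hi => ?_⟩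
  obtain ⟨D, g, h, hT⟩ := distinguished_cocone_triangle (E.map (homOfLE (Nat.le_succ i)))
  have hD : D ∈ μ.M j := μ.mem_of_iso ((shiftFunctorZero S ℤ).app D).symm
    (μ.antitone j (hN i (i + 1) hi i.lt_succ_self D g h hT))
  exact Triangle.shift_map_mor₁_comp_surjective (F.map_distinguished _ hT) (hj D hD)

end Metric

section HomotopyColimit

variable {S : Type u} [Category.{v} S] {T : Type u'} [Category.{v} T] [Preadditive T]
  [HasShift T ℤ] [∀ n : ℤ, (shiftFunctor T n).Additive] [HasCoproducts.{0} T]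
  (F : S ⥤ T) (E : ℕ ⥤ S)

lemma exists_eq_shift_map_oneMinusShift_comp {X : T} (N : ℕ)
    (hsurj : ∀ i, N ≤ i → Function.Surjective fun a : (F.obj (E.obj (i + 1)))⟦(1 : ℤ)⟧ ⟶ X =>
      (F.map (E.map (homOfLE (Nat.le_succ i))))⟦(1 : ℤ)⟧' ≫ a)
    (θ : (∐ fun i => F.obj (E.obj i))⟦(1 : ℤ)⟧ ⟶ X) :
    ∃ u, θ = (oneMinusShift F E)⟦(1 : ℤ)⟧' ≫ u := by
  have hc := isColimitOfHasCoproductOfPreservesColimit (shiftFunctor T (1 : ℤ))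
    fun i => F.obj (E.obj i)
  obtain ⟨u, hu⟩ := exists_sub_apply_succ_eq _ N hsurj
    fun i => (Sigma.ι (fun i => F.obj (E.obj i)) i)⟦(1 : ℤ)⟧' ≫ θ
  have hfac (i : ℕ) : (Sigma.ι (fun i => F.obj (E.obj i)) i)⟦(1 : ℤ)⟧' ≫
      Cofan.IsColimit.desc hc u = u i := Cofan.IsColimit.fac hc u i
  refine ⟨Cofan.IsColimit.desc hc u, Cofan.IsColimit.hom_ext hc _ _ fun i => ?_⟩
  rw [cofan_mk_inj, ← hu i, ← Functor.map_comp_assoc, ι_oneMinusShift, Functor.map_sub,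
    Preadditive.sub_comp, Functor.map_comp, assoc, hfac, hfac]

variable [HasZeroObject T] [Pretriangulated T] {F E}

lemma IsHoColim.δ_comp_eq_zero {X : T} {π : (∐ fun i => F.obj (E.obj i)) ⟶ X}
    {δ : X ⟶ (∐ fun i => F.obj (E.obj i))⟦(1 : ℤ)⟧} (hhoc : IsHoColim F E X π δ) {Y : T}
    (N : ℕ)
    (hsurj : ∀ i, N ≤ i → Function.Surjective fun a : (F.obj (E.obj (i + 1)))⟦(1 : ℤ)⟧ ⟶ Y =>
      (F.map (E.map (homOfLE (Nat.le_succ i))))⟦(1 : ℤ)⟧' ≫ a)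
    (θ : (∐ fun i => F.obj (E.obj i))⟦(1 : ℤ)⟧ ⟶ Y) : δ ≫ θ = 0 := by
  obtain ⟨u, rfl⟩ := exists_eq_shift_map_oneMinusShift_comp F E N hsurj θ
  have h0 : δ ≫ (oneMinusShift F E)⟦(1 : ℤ)⟧' = 0 := comp_distTriang_mor_zero₃₁ _ hhoc
  rw [← assoc, h0, zero_comp]

end HomotopyColimit

variable {S : Type u} [Category.{v} S] [Preadditive S] [HasZeroObject S]
  [HasShift S ℤ] [∀ n : ℤ, (CategoryTheory.shiftFunctor S n).Additive] [Pretriangulated S]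

variable {T : Type u'} [Category.{v} T] [Preadditive T] [HasZeroObject T]
  [HasShift T ℤ] [∀ n : ℤ, (CategoryTheory.shiftFunctor T n).Additive] [Pretriangulated T]
  [HasCoproducts.{0} T]

variable (F : S ⥤ T) [F.Additive]

theorem statement4 [F.CommShift ℤ] [F.IsTriangulated]
    (μ : TriMetric S) (hgood : GoodExtension F μ)
    (E : ℕ ⥤ S) (hE : CauchySeq μ E)
    (Ept : T) (π : (∐ fun i : ℕ => F.obj (E.obj i)) ⟶ Ept)
    (δ : Ept ⟶ (∐ fun i : ℕ => F.obj (E.obj i))⟦(1 : ℤ)⟧)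
    (hhoc : IsHoColim F E Ept π δ)
    (Xt : T) (hX : yObj F Xt ∈ Fc μ) :
    Function.Bijective (fun φ : Ept ⟶ Xt => yHom F φ) := by
  have hπ : oneMinusShift F E ≫ π = 0 := comp_distTriang_mor_zero₁₂ _ hhoc
  have hπ_succ := (oneMinusShift_comp_eq_zero_iff F E π).1 hπ
  obtain ⟨N, hN⟩ := hE.eventually_surjective F hX
  refine ⟨fun φ₁ φ₂ h => ?_, fun Φ => ?_⟩
  · refine Triangle.eq_of_mor₂_comp_eq hhoc (hhoc.δ_comp_eq_zero N hN) ?_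
    change π ≫ φ₁ = π ≫ φ₂
    exact Sigma.hom_ext _ _ fun i => by
      simpa using comp_eq_of_yHom_eq F h (Sigma.ι (fun i => F.obj (E.obj i)) i ≫ π)
  · let f (i : ℕ) : F.obj (E.obj i) ⟶ Xt :=
      Φ.app (Opposite.op (E.obj i)) (Sigma.ι (fun i => F.obj (E.obj i)) i ≫ π)
    have hf : oneMinusShift F E ≫ Sigma.desc f = 0 := by
      refine (oneMinusShift_comp_eq_zero_iff F E _).2 fun i => ?_
      rw [Sigma.ι_desc, Sigma.ι_desc, ← yObj_naturality, hπ_succ]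
    obtain ⟨φ, hφ⟩ := Triangle.yoneda_exact₂ _ hhoc (Sigma.desc f) hf
    refine ⟨φ, (hgood E hE Ept π δ hhoc).hom_ext F hπ fun i => ?_⟩
    rw [yMap_comp, yMap_comp]
    exact congrArg (yMap F) ((assoc _ _ _).trans ((congrArg _ hφ).symm.trans (Sigma.ι_desc f i)))

end Stmt4
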